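/- arXiv:1103.1795 — 2 statements merged into one kernel-verified Lean document; each statement's English description precedes it below -/
import Mathlib

section
/- Assume conditions (A1)–(A4). If p_n^2/n = o(1), then ||S_n(β_{n0}) − S̄_n(β_{n0})|| = O_p(p_n). -/
open MeasureTheory ProbabilityTheory Filter Matrix
open scoped BigOperators ENNReal NNReal Topology

noncomputable section

namespace GEE

/-- Euclidean norm of a vector in `Fin k → ℝ`. -/
def vnorm {k : ℕ} (v : Fin k → ℝ) : ℝ := Real.sqrt (∑ i, v i ^ 2)

/-- Frobenius norm of a real matrix. -/
def fnorm {a b : ℕ} (M : Matrix (Fin a) (Fin b) ℝ) : ℝ :=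
  Real.sqrt (∑ i, ∑ j, M i j ^ 2)

/-- The logistic (inverse logit) function. -/
def logistic (t : ℝ) : ℝ := Real.exp t / (1 + Real.exp t)

/-- `Z_n = O_p(a_n)` : boundedness in probability of `Z_n / a_n`. -/
def IsBigOP {Ω : ℕ → Type} [∀ n, MeasurableSpace (Ω n)]
    (P : ∀ n, Measure (Ω n)) (Z : ∀ n, Ω n → ℝ) (a : ℕ → ℝ) : Prop :=
  ∀ ε : ℝ, 0 < ε → ∃ C : ℝ, 0 < C ∧
    ∀ᶠ n in atTop, P n {ω | C * a n < |Z n ω|} ≤ ENNReal.ofReal ε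

/-- `Z_n = o_p(a_n)` : `Z_n / a_n` converges to `0` in probability. -/
def IsLittleOP {Ω : ℕ → Type} [∀ n, MeasurableSpace (Ω n)]
    (P : ∀ n, Measure (Ω n)) (Z : ∀ n, Ω n → ℝ) (a : ℕ → ℝ) : Prop :=
  ∀ ε : ℝ, 0 < ε →
    Tendsto (fun n => P n {ω | ε * a n < |Z n ω|}) atTop (𝓝 0)

/-- Convergence in distribution to the standard normal law, stated via CDFs. -/
def TendstoStdNormal {Ω : ℕ → Type} [∀ n, MeasurableSpace (Ω n)]
    (P : ∀ n, Measure (Ω n)) (Z : ∀ n, Ω n → ℝ) : Prop :=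
  ∀ t : ℝ, Tendsto (fun n => (P n {ω | Z n ω ≤ t}).toReal) atTop
    (𝓝 ((gaussianReal 0 1 (Set.Iic t)).toReal))

/-- Convergence in distribution to the `l`-dimensional standard normal law `N_l(0, I_l)`. -/
def TendstoStdNormalVec {Ω : ℕ → Type} [∀ n, MeasurableSpace (Ω n)] (l : ℕ)
    (P : ∀ n, Measure (Ω n)) (Z : ∀ n, Ω n → Fin l → ℝ) : Prop :=
  ∀ t : Fin l → ℝ, Tendsto
    (fun n => (P n {ω | ∀ j, Z n ω j ≤ t j}).toReal) atTop
    (𝓝 (((Measure.pi fun _ : Fin l => gaussianReal 0 1) {x | ∀ j, x j ≤ t j}).toReal))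

/-- The chi-squared distribution with `l` degrees of freedom, realized as the law of the
sum of squares of `l` i.i.d. standard normals. -/
def chiSq (l : ℕ) : Measure ℝ :=
  Measure.map (fun x : Fin l → ℝ => ∑ j, x j ^ 2)
    (Measure.pi fun _ : Fin l => gaussianReal 0 1)

/-- Convergence in distribution to the chi-squared law with `l` degrees of freedom. -/
def TendstoChiSq {Ω : ℕ → Type} [∀ n, MeasurableSpace (Ω n)] (l : ℕ)
    (P : ∀ n, Measure (Ω n)) (Z : ∀ n, Ω n → ℝ) : Prop :=
  ∀ t : ℝ, Tendsto (fun n => (P n {ω | Z n ω ≤ t}).toReal) atTop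
    (𝓝 ((chiSq l (Set.Iic t)).toReal))

/-- Marginal mean vector `π_i(β)` of cluster `i` under the marginal logistic model. -/
def piv {a b : ℕ} (Xi : Matrix (Fin a) (Fin b) ℝ) (β : Fin b → ℝ) : Fin a → ℝ :=
  fun j => logistic (Xi.mulVec β j)

/-- The diagonal matrix `A_i(β)^{1/2}`. -/
def Ahalf {a b : ℕ} (Xi : Matrix (Fin a) (Fin b) ℝ) (β : Fin b → ℝ) :
    Matrix (Fin a) (Fin a) ℝ :=
  Matrix.diagonal fun j => Real.sqrt (piv Xi β j * (1 - piv Xi β j))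

/-- The diagonal matrix `A_i(β)^{-1/2}`. -/
def Ainvhalf {a b : ℕ} (Xi : Matrix (Fin a) (Fin b) ℝ) (β : Fin b → ℝ) :
    Matrix (Fin a) (Fin a) ℝ :=
  Matrix.diagonal fun j => (Real.sqrt (piv Xi β j * (1 - piv Xi β j)))⁻¹

/-- Standardized residual `ε_i(β) = A_i(β)^{-1/2} (Y_i - π_i(β))`. -/
def eps {a b : ℕ} (Xi : Matrix (Fin a) (Fin b) ℝ) (β : Fin b → ℝ) (Yi : Fin a → ℝ) :
    Fin a → ℝ :=
  (Ainvhalf Xi β).mulVec (Yi - piv Xi β)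

/-- Single-cluster contribution `X_iᵀ A_i^{1/2}(β) W A_i^{-1/2}(β) (Y_i - π_i(β))` to a GEE
estimating function with working inverse-correlation matrix `W`. -/
def Scluster {a b : ℕ} (Xi : Matrix (Fin a) (Fin b) ℝ) (W : Matrix (Fin a) (Fin a) ℝ)
    (β : Fin b → ℝ) (Yi : Fin a → ℝ) : Fin b → ℝ :=
  (Xiᵀ * Ahalf Xi β * W * Ainvhalf Xi β).mulVec (Yi - piv Xi β)

/-- Single-cluster contribution `X_iᵀ A_i^{1/2}(β) W A_i^{1/2}(β) X_i` to `H̄_n(β)`. -/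
def Hcluster {a b : ℕ} (Xi : Matrix (Fin a) (Fin b) ℝ) (W : Matrix (Fin a) (Fin a) ℝ)
    (β : Fin b → ℝ) : Matrix (Fin b) (Fin b) ℝ :=
  Xiᵀ * Ahalf Xi β * W * Ahalf Xi β * Xi

/-- Single-cluster contribution `X_iᵀ A_i^{1/2}(β) W R W A_i^{1/2}(β) X_i` to `M̄_n(β)`. -/
def Mcluster {a b : ℕ} (Xi : Matrix (Fin a) (Fin b) ℝ) (W R : Matrix (Fin a) (Fin a) ℝ)
    (β : Fin b → ℝ) : Matrix (Fin b) (Fin b) ℝ :=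
  Xiᵀ * Ahalf Xi β * W * R * W * Ahalf Xi β * Xi

/-- Single-cluster contribution `X_iᵀ A_i^{1/2}(β) W ε_i(β) ε_i(β)ᵀ W A_i^{1/2}(β) X_i` to the
middle of the sandwich estimator. -/
def Mhatcluster {a b : ℕ} (Xi : Matrix (Fin a) (Fin b) ℝ) (W : Matrix (Fin a) (Fin a) ℝ)
    (β : Fin b → ℝ) (Yi : Fin a → ℝ) : Matrix (Fin b) (Fin b) ℝ :=
  Xiᵀ * Ahalf Xi β * W * vecMulVec (eps Xi β Yi) (eps Xi β Yi) * W * Ahalf Xi β * Xi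

/-- The Jacobian matrix (`∂f/∂βᵀ`) of a map `f : (Fin b → ℝ) → (Fin b → ℝ)` at `β`. -/
def jacobian {b : ℕ} (f : (Fin b → ℝ) → (Fin b → ℝ)) (β : Fin b → ℝ) :
    Matrix (Fin b) (Fin b) ℝ :=
  Matrix.of fun k l => fderiv ℝ (fun x => f x k) β (Pi.single l 1)

/-- Smallest Rayleigh quotient value over unit vectors; equals `λ_min(M)` for symmetric `M`. -/
def lmin {b : ℕ} (M : Matrix (Fin b) (Fin b) ℝ) : ℝ :=
  sInf {r | ∃ v : Fin b → ℝ, vnorm v = 1 ∧ r = v ⬝ᵥ M.mulVec v}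

/-- Largest Rayleigh quotient value over unit vectors; equals `λ_max(M)` for symmetric `M`. -/
def lmax {b : ℕ} (M : Matrix (Fin b) (Fin b) ℝ) : ℝ :=
  sSup {r | ∃ v : Fin b → ℝ, vnorm v = 1 ∧ r = v ⬝ᵥ M.mulVec v}

/-! General GEE versions (arbitrary smooth marginal mean function `μ`). -/

/-- Marginal mean vector `μ_i(β)` in the general GEE model with mean function `mu`. -/
def gpiv {a b : ℕ} (mu : ℝ → ℝ) (Xi : Matrix (Fin a) (Fin b) ℝ) (β : Fin b → ℝ) :
    Fin a → ℝ :=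
  fun j => mu (Xi.mulVec β j)

/-- `A_i(β)^{1/2}` in the general GEE model: diagonal with entries `√(μ̇(X_ijᵀ β))`. -/
def gAhalf {a b : ℕ} (mu : ℝ → ℝ) (Xi : Matrix (Fin a) (Fin b) ℝ) (β : Fin b → ℝ) :
    Matrix (Fin a) (Fin a) ℝ :=
  Matrix.diagonal fun j => Real.sqrt (deriv mu (Xi.mulVec β j))

/-- `A_i(β)^{-1/2}` in the general GEE model. -/
def gAinvhalf {a b : ℕ} (mu : ℝ → ℝ) (Xi : Matrix (Fin a) (Fin b) ℝ) (β : Fin b → ℝ) :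
    Matrix (Fin a) (Fin a) ℝ :=
  Matrix.diagonal fun j => (Real.sqrt (deriv mu (Xi.mulVec β j)))⁻¹

/-- Standardized residual in the general GEE model. -/
def geps {a b : ℕ} (mu : ℝ → ℝ) (Xi : Matrix (Fin a) (Fin b) ℝ) (β : Fin b → ℝ)
    (Yi : Fin a → ℝ) : Fin a → ℝ :=
  (gAinvhalf mu Xi β).mulVec (Yi - gpiv mu Xi β)

/-- Single-cluster contribution to the general GEE estimating function. -/
def gScluster {a b : ℕ} (mu : ℝ → ℝ) (Xi : Matrix (Fin a) (Fin b) ℝ)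
    (W : Matrix (Fin a) (Fin a) ℝ) (β : Fin b → ℝ) (Yi : Fin a → ℝ) : Fin b → ℝ :=
  (Xiᵀ * gAhalf mu Xi β * W * gAinvhalf mu Xi β).mulVec (Yi - gpiv mu Xi β)

/-- Single-cluster contribution to `H̄_n(β)` in the general GEE model. -/
def gHcluster {a b : ℕ} (mu : ℝ → ℝ) (Xi : Matrix (Fin a) (Fin b) ℝ)
    (W : Matrix (Fin a) (Fin a) ℝ) (β : Fin b → ℝ) : Matrix (Fin b) (Fin b) ℝ :=
  Xiᵀ * gAhalf mu Xi β * W * gAhalf mu Xi β * Xi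

/-- Single-cluster contribution to `M̄_n(β)` in the general GEE model. -/
def gMcluster {a b : ℕ} (mu : ℝ → ℝ) (Xi : Matrix (Fin a) (Fin b) ℝ)
    (W R : Matrix (Fin a) (Fin a) ℝ) (β : Fin b → ℝ) : Matrix (Fin b) (Fin b) ℝ :=
  Xiᵀ * gAhalf mu Xi β * W * R * W * gAhalf mu Xi β * Xi

end GEE

open GEE

/-!
With `W = R̂⁻¹ - R̄⁻¹`, the difference `S_n(β₀) - S̄_n(β₀)` is linear in `W`: its `q`-th entry is
`∑ k l, W k l * v k l q` with `v k l q = ∑ i, A_ik^{1/2} X_ikq ε_il` (`scoreCoeff`), so by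
Cauchy–Schwarz its norm is at most `‖W‖_F (∑ v k l q ²)^{1/2}`. The standardized Bernoulli
residuals `ε_il` are centred, have unit variance and are independent across clusters, hence
`E ∑ v k l q ² ≤ m ∑ i k, ‖X_ik‖² = O(n p_n)` by (A1). Markov's inequality makes the second factor
`O_p(√(n p_n))`, and with (A4) the product is `O_p(√(p_n / n) √(n p_n)) = O_p(p_n)`.
-/

section Moments

variable {Ω : Type*} [MeasurableSpace Ω] {P : Measure Ω}

lemma memLp_of_zero_or_one [IsFiniteMeasure P] {Z : Ω → ℝ} (hZm : Measurable Z)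
    (hZ : ∀ ω, Z ω = 0 ∨ Z ω = 1) (q : ℝ≥0∞) : MemLp Z q P :=
  MemLp.of_bound hZm.aestronglyMeasurable 1 (Eventually.of_forall fun ω => by
    rcases hZ ω with h | h <;> simp [h])

lemma variance_of_zero_or_one [IsProbabilityMeasure P] {Z : Ω → ℝ} (hZm : Measurable Z)
    (hZ : ∀ ω, Z ω = 0 ∨ Z ω = 1) : Var[Z; P] = P[Z] * (1 - P[Z]) := by
  have hsq : Z ^ 2 = Z := funext fun ω => by rcases hZ ω with h | h <;> simp [h]
  rw [variance_eq_sub (memLp_of_zero_or_one hZm hZ 2), hsq]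
  ring

lemma integral_sq_sum_mul_of_indepFun {ι : Type*} [IsProbabilityMeasure P] [Fintype ι]
    {Z : ι → Ω → ℝ} (hZ : ∀ i, MemLp (Z i) 2 P) (hmean : ∀ i, ∫ ω, Z i ω ∂P = 0)
    (hind : Pairwise fun i j => IndepFun (Z i) (Z j) P) (c : ι → ℝ) :
    ∫ ω, (∑ i, c i * Z i ω) ^ 2 ∂P = ∑ i, c i ^ 2 * Var[Z i; P] := by
  have hcZ : ∀ i, MemLp (fun ω => c i * Z i ω) 2 P := fun i => (hZ i).const_mul (c i)
  have hsum : (fun ω => ∑ i, c i * Z i ω) = ∑ i, fun ω => c i * Z i ω := by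
    ext ω; simp
  have hcenter : ∫ ω, ∑ i, c i * Z i ω ∂P = 0 := by
    rw [integral_finsetSum _ fun i _ => (hcZ i).integrable one_le_two]
    simp [integral_const_mul, hmean]
  rw [← variance_of_integral_eq_zero (memLp_finsetSum _ fun i _ => hcZ i).aemeasurable hcenter,
    hsum, IndepFun.variance_sum (fun i _ => hcZ i) fun i _ j _ hij =>
      (hind hij).comp (measurable_const_mul (c i)) (measurable_const_mul (c j))]
  exact Finset.sum_congr rfl fun i _ => variance_const_mul (c i) (Z i) P

end Moments

namespace GEE.IsBigOP

variable {Ω : ℕ → Type} [∀ n, MeasurableSpace (Ω n)] {P : ∀ n, Measure (Ω n)}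

lemma congr_rate {Z : ∀ n, Ω n → ℝ} {a b : ℕ → ℝ} (hZ : IsBigOP P Z a) (hab : a =ᶠ[atTop] b) :
    IsBigOP P Z b := by
  intro ε hε
  obtain ⟨C, hC, hev⟩ := hZ ε hε
  refine ⟨C, hC, ?_⟩
  filter_upwards [hev, hab] with n hn hn'
  rwa [← hn']

lemma of_abs_le_mul {Z U V : ∀ n, Ω n → ℝ} {a b : ℕ → ℝ}
    (hZ : ∀ n ω, |Z n ω| ≤ |U n ω| * |V n ω|) (hU : IsBigOP P U a) (hV : IsBigOP P V b) :
    IsBigOP P Z fun n => a n * b n := by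
  intro ε hε
  obtain ⟨C, hC, hUev⟩ := hU (ε / 2) (half_pos hε)
  obtain ⟨C', hC', hVev⟩ := hV (ε / 2) (half_pos hε)
  refine ⟨C * C', mul_pos hC hC', ?_⟩
  filter_upwards [hUev, hVev] with n hUn hVn
  have hsub : {ω | C * C' * (a n * b n) < |Z n ω|} ⊆
      {ω | C * a n < |U n ω|} ∪ {ω | C' * b n < |V n ω|} := by
    intro ω (hω : _ < |Z n ω|)
    by_contra hnot
    rw [Set.mem_union, not_or] at hnot
    have hUle : |U n ω| ≤ C * a n := not_lt.1 hnot.1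
    have hVle : |V n ω| ≤ C' * b n := not_lt.1 hnot.2
    refine hω.not_ge ((hZ n ω).trans ?_)
    calc |U n ω| * |V n ω| ≤ C * a n * (C' * b n) :=
          mul_le_mul hUle hVle (abs_nonneg _) ((abs_nonneg _).trans hUle)
      _ = C * C' * (a n * b n) := by ring
  calc P n {ω | C * C' * (a n * b n) < |Z n ω|}
      ≤ P n {ω | C * a n < |U n ω|} + P n {ω | C' * b n < |V n ω|} :=
        (measure_mono hsub).trans (measure_union_le _ _)
    _ ≤ ENNReal.ofReal (ε / 2) + ENNReal.ofReal (ε / 2) := add_le_add hUn hVn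
    _ = ENNReal.ofReal ε := by rw [← ENNReal.ofReal_add (by positivity) (by positivity), add_halves]

lemma sqrt_of_integral_le [∀ n, IsFiniteMeasure (P n)] {T : ∀ n, Ω n → ℝ} {b : ℕ → ℝ} {K : ℝ}
    (hT : ∀ n ω, 0 ≤ T n ω) (hint : ∀ n, Integrable (T n) (P n))
    (hmom : ∀ᶠ n in atTop, ∫ ω, T n ω ∂P n ≤ K * b n ^ 2) (hb : ∀ᶠ n in atTop, 0 < b n) :
    IsBigOP P (fun n ω => √(T n ω)) b := by
  intro ε hε
  set K' := max K 1
  have hK' : 0 < K' := lt_max_of_lt_right one_pos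
  refine ⟨√(K' / ε), Real.sqrt_pos.2 (div_pos hK' hε), ?_⟩
  filter_upwards [hmom, hb] with n hmomn hbn
  set t := K' / ε * b n ^ 2
  have ht : 0 < t := by positivity
  have hsub : {ω | √(K' / ε) * b n < |√(T n ω)|} ⊆ {ω | t ≤ T n ω} := by
    intro ω (hω : _ < |√(T n ω)|)
    rw [abs_of_nonneg (Real.sqrt_nonneg _)] at hω
    have hsq := pow_le_pow_left₀ (by positivity) hω.le 2
    rwa [mul_pow, Real.sq_sqrt (by positivity), Real.sq_sqrt (hT n ω)] at hsq
  have hmarkov : t * (P n {ω | t ≤ T n ω}).toReal ≤ ∫ ω, T n ω ∂P n :=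
    mul_meas_ge_le_integral_of_nonneg (Eventually.of_forall (hT n)) (hint n) t
  have hprob : (P n {ω | t ≤ T n ω}).toReal ≤ ε := by
    rw [← mul_le_mul_iff_of_pos_left ht]
    calc t * (P n {ω | t ≤ T n ω}).toReal ≤ K' * b n ^ 2 :=
          hmarkov.trans (hmomn.trans (by gcongr; exact le_max_left _ _))
      _ = t * ε := by simp only [t]; field_simp
  exact (measure_mono hsub).trans
    ((ENNReal.le_ofReal_iff_toReal_le (measure_ne_top _ _) hε.le).2 hprob)

end GEE.IsBigOP

namespace GEE

lemma logistic_mem_Ioo (t : ℝ) : logistic t ∈ Set.Ioo 0 1 := by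
  have h := Real.exp_pos t
  exact ⟨by unfold logistic; positivity, by rw [logistic, div_lt_one (by positivity)]; linarith⟩

lemma piv_mul_one_sub_pos {a b : ℕ} (Xi : Matrix (Fin a) (Fin b) ℝ) (β : Fin b → ℝ) (j : Fin a) :
    0 < piv Xi β j * (1 - piv Xi β j) := by
  obtain ⟨h0, h1⟩ := logistic_mem_Ioo (Xi.mulVec β j)
  exact mul_pos h0 (sub_pos.mpr h1)

lemma piv_mul_one_sub_le_one {a b : ℕ} (Xi : Matrix (Fin a) (Fin b) ℝ) (β : Fin b → ℝ)
    (j : Fin a) : piv Xi β j * (1 - piv Xi β j) ≤ 1 := by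
  obtain ⟨h0, h1⟩ := logistic_mem_Ioo (Xi.mulVec β j)
  unfold piv
  nlinarith

lemma eps_apply {a b : ℕ} (Xi : Matrix (Fin a) (Fin b) ℝ) (β : Fin b → ℝ) (y : Fin a → ℝ)
    (j : Fin a) :
    eps Xi β y j = (√(piv Xi β j * (1 - piv Xi β j)))⁻¹ * (y j - piv Xi β j) := by
  simp [eps, Ainvhalf, Matrix.mulVec_diagonal]

lemma measurable_eps_apply {a b : ℕ} (Xi : Matrix (Fin a) (Fin b) ℝ) (β : Fin b → ℝ)
    (j : Fin a) : Measurable fun y => eps Xi β y j := by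
  simp_rw [eps_apply]
  fun_prop

lemma vnorm_nonneg {k : ℕ} (v : Fin k → ℝ) : 0 ≤ vnorm v := Real.sqrt_nonneg _

lemma fnorm_nonneg {a b : ℕ} (M : Matrix (Fin a) (Fin b) ℝ) : 0 ≤ fnorm M := Real.sqrt_nonneg _

lemma vnorm_sq {k : ℕ} (v : Fin k → ℝ) : vnorm v ^ 2 = ∑ i, v i ^ 2 :=
  Real.sq_sqrt (by positivity)

lemma sum_sq_entries_le {n m p : ℕ} (X : Fin n → Matrix (Fin m) (Fin p) ℝ) {C : ℝ}
    (hX : ∀ i k, vnorm (X i k) ≤ C * √p) :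
    ∑ i, ∑ k, ∑ q, X i k q ^ 2 ≤ n * (m * (C ^ 2 * p)) := by
  have hrow : ∀ i k, ∑ q, X i k q ^ 2 ≤ C ^ 2 * p := fun i k => by
    rw [← vnorm_sq, ← Real.sq_sqrt (Nat.cast_nonneg p), ← mul_pow]
    exact pow_le_pow_left₀ (Real.sqrt_nonneg _) (hX i k) 2
  calc ∑ i, ∑ k, ∑ q, X i k q ^ 2 ≤ ∑ _i : Fin n, ∑ _k : Fin m, C ^ 2 * p :=
        Finset.sum_le_sum fun i _ => Finset.sum_le_sum fun k _ => hrow i k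
    _ = n * (m * (C ^ 2 * p)) := by simp

section Residual

variable {Ω : Type*} [MeasurableSpace Ω] {P : Measure Ω} [IsProbabilityMeasure P]
  {a b : ℕ} {Xi : Matrix (Fin a) (Fin b) ℝ} {β : Fin b → ℝ} {Y : Ω → Fin a → ℝ}

lemma memLp_eps_apply (hYm : Measurable Y) (hY : ∀ ω j, Y ω j = 0 ∨ Y ω j = 1) (j : Fin a) :
    MemLp (fun ω => eps Xi β (Y ω) j) 2 P := by
  simp_rw [eps_apply]
  exact ((memLp_of_zero_or_one (measurable_pi_iff.1 hYm j) (hY · j) 2).sub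
    (memLp_const _)).const_mul _

lemma integral_eps_apply (hYm : Measurable Y) (hY : ∀ ω j, Y ω j = 0 ∨ Y ω j = 1)
    (hmean : ∀ j, ∫ ω, Y ω j ∂P = piv Xi β j) (j : Fin a) :
    ∫ ω, eps Xi β (Y ω) j ∂P = 0 := by
  simp_rw [eps_apply]
  rw [integral_const_mul, integral_sub ((memLp_of_zero_or_one (measurable_pi_iff.1 hYm j)
    (hY · j) 1).integrable le_rfl) (integrable_const _), hmean, integral_const]
  simp

lemma variance_eps_apply (hYm : Measurable Y) (hY : ∀ ω j, Y ω j = 0 ∨ Y ω j = 1)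
    (hmean : ∀ j, ∫ ω, Y ω j ∂P = piv Xi β j) (j : Fin a) :
    Var[fun ω => eps Xi β (Y ω) j; P] = 1 := by
  have hpos := piv_mul_one_sub_pos Xi β j
  simp_rw [eps_apply]
  rw [variance_const_mul, variance_sub_const (measurable_pi_iff.1 hYm j).aestronglyMeasurable,
    variance_of_zero_or_one (measurable_pi_iff.1 hYm j) (hY · j), hmean, inv_pow,
    Real.sq_sqrt hpos.le, inv_mul_cancel₀ hpos.ne']

end Residual

lemma Scluster_apply {a b : ℕ} (Xi : Matrix (Fin a) (Fin b) ℝ) (W : Matrix (Fin a) (Fin a) ℝ)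
    (β : Fin b → ℝ) (y : Fin a → ℝ) (q : Fin b) :
    Scluster Xi W β y q =
      ∑ k, ∑ l, W k l * (√(piv Xi β k * (1 - piv Xi β k)) * Xi k q * eps Xi β y l) := by
  have h : Scluster Xi W β y = Xiᵀ *ᵥ (Ahalf Xi β *ᵥ (W *ᵥ eps Xi β y)) := by
    simp only [Scluster, eps, mulVec_mulVec, Matrix.mul_assoc]
  have hA : Ahalf Xi β *ᵥ (W *ᵥ eps Xi β y) =
      fun k => √(piv Xi β k * (1 - piv Xi β k)) * (W *ᵥ eps Xi β y) k :=
    funext (mulVec_diagonal _ _)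
  rw [h, hA]
  simp only [mulVec, dotProduct, transpose_apply, Finset.mul_sum]
  exact Finset.sum_congr rfl fun k _ => Finset.sum_congr rfl fun l _ => by ring

def scoreCoeff {n m p : ℕ} (X : Fin n → Matrix (Fin m) (Fin p) ℝ) (β : Fin p → ℝ)
    (y : Fin n → Fin m → ℝ) (k l : Fin m) (q : Fin p) : ℝ :=
  ∑ i, √(piv (X i) β k * (1 - piv (X i) β k)) * X i k q * eps (X i) β (y i) l

lemma sum_Scluster_apply {n m p : ℕ} (X : Fin n → Matrix (Fin m) (Fin p) ℝ)
    (W : Matrix (Fin m) (Fin m) ℝ) (β : Fin p → ℝ) (y : Fin n → Fin m → ℝ) (q : Fin p) :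
    (∑ i, Scluster (X i) W β (y i)) q = ∑ k, ∑ l, W k l * scoreCoeff X β y k l q := by
  simp only [Finset.sum_apply, Scluster_apply, scoreCoeff, Finset.mul_sum]
  rw [Finset.sum_comm]
  exact Finset.sum_congr rfl fun k _ => Finset.sum_comm

lemma vnorm_le_fnorm_mul_sqrt {a b c : ℕ} (D : Matrix (Fin a) (Fin b) ℝ)
    (v : Fin a → Fin b → Fin c → ℝ) :
    vnorm (fun q => ∑ k, ∑ l, D k l * v k l q) ≤ fnorm D * √(∑ k, ∑ l, ∑ q, v k l q ^ 2) := by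
  rw [vnorm, fnorm, ← Real.sqrt_mul (by positivity)]
  refine Real.sqrt_le_sqrt ?_
  have hcs : ∀ q, (∑ k, ∑ l, D k l * v k l q) ^ 2 ≤
      (∑ k, ∑ l, D k l ^ 2) * ∑ k, ∑ l, v k l q ^ 2 := fun q => by
    simpa only [Fintype.sum_prod_type] using
      Finset.sum_mul_sq_le_sq_mul_sq Finset.univ (fun x : Fin a × Fin b => D x.1 x.2)
        fun x => v x.1 x.2 q
  calc ∑ q, (∑ k, ∑ l, D k l * v k l q) ^ 2
      ≤ ∑ q, (∑ k, ∑ l, D k l ^ 2) * ∑ k, ∑ l, v k l q ^ 2 := Finset.sum_le_sum fun q _ => hcs q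
    _ = (∑ k, ∑ l, D k l ^ 2) * ∑ k, ∑ l, ∑ q, v k l q ^ 2 := by
      rw [← Finset.mul_sum, Finset.sum_comm]
      simp only [Finset.sum_comm (γ := Fin c)]

lemma vnorm_sum_Scluster_sub_le {n m p : ℕ} (X : Fin n → Matrix (Fin m) (Fin p) ℝ)
    (W W' : Matrix (Fin m) (Fin m) ℝ) (β : Fin p → ℝ) (y : Fin n → Fin m → ℝ) :
    vnorm ((∑ i, Scluster (X i) W β (y i)) - ∑ i, Scluster (X i) W' β (y i)) ≤
      fnorm (W - W') * √(∑ k, ∑ l, ∑ q, scoreCoeff X β y k l q ^ 2) := by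
  convert vnorm_le_fnorm_mul_sqrt (W - W') (scoreCoeff X β y) using 2
  ext q
  simp only [Pi.sub_apply, sum_Scluster_apply, Matrix.sub_apply, sub_mul, Finset.sum_sub_distrib]

section ScoreMoments

variable {Ω : Type*} [MeasurableSpace Ω] {P : Measure Ω} [IsProbabilityMeasure P]
  {n m p : ℕ} (X : Fin n → Matrix (Fin m) (Fin p) ℝ) (β : Fin p → ℝ)
  {Y : Fin n → Ω → Fin m → ℝ} (hYm : ∀ i, Measurable (Y i))
  (hY : ∀ i ω j, Y i ω j = 0 ∨ Y i ω j = 1)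

include hYm hY in
lemma memLp_scoreCoeff (k l : Fin m) (q : Fin p) :
    MemLp (fun ω => scoreCoeff X β (fun i => Y i ω) k l q) 2 P :=
  memLp_finsetSum _ fun i _ => (memLp_eps_apply (hYm i) (hY i) l).const_mul _

include hYm hY in
lemma integrable_sum_sq_scoreCoeff :
    Integrable (fun ω => ∑ k, ∑ l, ∑ q, scoreCoeff X β (fun i => Y i ω) k l q ^ 2) P :=
  integrable_finsetSum _ fun k _ => integrable_finsetSum _ fun l _ =>
    integrable_finsetSum _ fun q _ => (memLp_scoreCoeff X β hYm hY k l q).integrable_sq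

include hYm hY in
lemma integral_sum_sq_scoreCoeff_le (hind : Pairwise fun i j => IndepFun (Y i) (Y j) P)
    (hmean : ∀ i j, ∫ ω, Y i ω j ∂P = piv (X i) β j) :
    ∫ ω, ∑ k, ∑ l, ∑ q, scoreCoeff X β (fun i => Y i ω) k l q ^ 2 ∂P ≤
      m * ∑ i, ∑ k, ∑ q, X i k q ^ 2 := by
  have hsq : ∀ k l q, ∫ ω, scoreCoeff X β (fun i => Y i ω) k l q ^ 2 ∂P =
      ∑ i, (√(piv (X i) β k * (1 - piv (X i) β k)) * X i k q) ^ 2 := fun k l q => by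
    simp only [scoreCoeff]
    rw [integral_sq_sum_mul_of_indepFun (fun i => memLp_eps_apply (hYm i) (hY i) l)
      (fun i => integral_eps_apply (hYm i) (hY i) (hmean i) l)
      (fun i j hij => (hind hij).comp (measurable_eps_apply _ _ l) (measurable_eps_apply _ _ l))]
    simp only [variance_eps_apply (hYm _) (hY _) (hmean _), mul_one]
  have hweight : ∀ i k q, (√(piv (X i) β k * (1 - piv (X i) β k)) * X i k q) ^ 2 ≤ X i k q ^ 2 :=
    fun i k q => by
      rw [mul_pow, Real.sq_sqrt (piv_mul_one_sub_pos _ _ _).le]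
      exact mul_le_of_le_one_left (sq_nonneg _) (piv_mul_one_sub_le_one _ _ _)
  have hint : ∀ k l q, Integrable (fun ω => scoreCoeff X β (fun i => Y i ω) k l q ^ 2) P :=
    fun k l q => (memLp_scoreCoeff X β hYm hY k l q).integrable_sq
  calc ∫ ω, ∑ k, ∑ l, ∑ q, scoreCoeff X β (fun i => Y i ω) k l q ^ 2 ∂P
      = ∑ k, ∑ l : Fin m, ∑ q, ∑ i, (√(piv (X i) β k * (1 - piv (X i) β k)) * X i k q) ^ 2 := by
        rw [integral_finsetSum _ fun k _ => integrable_finsetSum _ fun l _ =>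
          integrable_finsetSum _ fun q _ => hint k l q]
        refine Finset.sum_congr rfl fun k _ => ?_
        rw [integral_finsetSum _ fun l _ => integrable_finsetSum _ fun q _ => hint k l q]
        refine Finset.sum_congr rfl fun l _ => ?_
        rw [integral_finsetSum _ fun q _ => hint k l q]
        exact Finset.sum_congr rfl fun q _ => hsq k l q
    _ ≤ ∑ k, ∑ _l : Fin m, ∑ q, ∑ i, X i k q ^ 2 :=
        Finset.sum_le_sum fun k _ => Finset.sum_le_sum fun l _ => Finset.sum_le_sum fun q _ =>
          Finset.sum_le_sum fun i _ => hweight i k q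
    _ = m * ∑ i, ∑ k, ∑ q, X i k q ^ 2 := by
        simp only [Finset.sum_const, Finset.card_univ, Fintype.card_fin, nsmul_eq_mul,
          ← Finset.mul_sum]
        exact congrArg _ ((Finset.sum_congr rfl fun k _ => Finset.sum_comm).trans Finset.sum_comm)

end ScoreMoments

end GEE

theorem gee_estimating_function_approximation_general
    (m : ℕ) (p : ℕ → ℕ) (hp : ∀ n, 0 < p n)
    (Ω : ℕ → Type) [∀ n, MeasurableSpace (Ω n)]
    (P : ∀ n, Measure (Ω n)) [∀ n, IsProbabilityMeasure (P n)]
    (X : ∀ n, Fin n → Matrix (Fin m) (Fin (p n)) ℝ)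
    (Y : ∀ n, Fin n → Ω n → Fin m → ℝ)
    (β0 : ∀ n, Fin (p n) → ℝ)
    (hmeas : ∀ n i, Measurable (Y n i))
    (hbin : ∀ n i ω j, Y n i ω j = 0 ∨ Y n i ω j = 1)
    (hindep : ∀ n, iIndepFun (fun i => Y n i) (P n))
    (hmean : ∀ n (i : Fin n) j, ∫ ω, Y n i ω j ∂(P n) = piv (X n i) (β0 n) j)
    (hA1 : ∃ C : ℝ, ∀ n (i : Fin n) j, vnorm (X n i j) ≤ C * Real.sqrt (p n))
    (Rbar : Matrix (Fin m) (Fin m) ℝ)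
    (Rhat : ∀ n, Ω n → Matrix (Fin m) (Fin m) ℝ)
    (hA4 : IsBigOP P (fun n ω => fnorm ((Rhat n ω)⁻¹ - Rbar⁻¹))
      (fun n => Real.sqrt (p n / n))) :
    IsBigOP P (fun n ω => vnorm
        ((∑ i, Scluster (X n i) ((Rhat n ω)⁻¹) (β0 n) (Y n i ω)) -
         (∑ i, Scluster (X n i) Rbar⁻¹ (β0 n) (Y n i ω))))
      (fun n => (p n : ℝ)) := by
  obtain ⟨C, hC⟩ := hA1
  let T : ∀ n, Ω n → ℝ := fun n ω =>
    ∑ k, ∑ l, ∑ q, scoreCoeff (X n) (β0 n) (fun i => Y n i ω) k l q ^ 2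
  have hT : IsBigOP P (fun n ω => √(T n ω)) fun n => √(n * p n) := by
    refine IsBigOP.sqrt_of_integral_le (K := m ^ 2 * C ^ 2) (fun n ω => by positivity)
      (fun n => integrable_sum_sq_scoreCoeff _ _ (hmeas n) (hbin n))
      (Eventually.of_forall fun n => ?_) ?_
    · calc ∫ ω, T n ω ∂P n ≤ m * ∑ i, ∑ k, ∑ q, X n i k q ^ 2 :=
            integral_sum_sq_scoreCoeff_le _ _ (hmeas n) (hbin n)
              (fun i j hij => (hindep n).indepFun hij) (hmean n)
        _ ≤ m * (n * (m * (C ^ 2 * p n))) := by gcongr; exact sum_sq_entries_le _ (hC n)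
        _ = m ^ 2 * C ^ 2 * √(n * p n) ^ 2 := by
            rw [Real.sq_sqrt (by positivity)]; ring
    · filter_upwards [eventually_gt_atTop 0] with n hn
      have hpn := hp n
      positivity
  refine IsBigOP.congr_rate (IsBigOP.of_abs_le_mul (fun n ω => ?_) hA4 hT) ?_
  · rw [abs_of_nonneg (vnorm_nonneg _), abs_of_nonneg (fnorm_nonneg _),
      abs_of_nonneg (Real.sqrt_nonneg _)]
    exact vnorm_sum_Scluster_sub_le (X n) _ _ (β0 n) fun i => Y n i ω
  · filter_upwards [eventually_gt_atTop 0] with n hn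
    have hsq : (p n : ℝ) / n * (n * p n) = (p n : ℝ) ^ 2 := by field_simp
    rw [← Real.sqrt_mul (by positivity), hsq, Real.sqrt_sq (Nat.cast_nonneg _)]

/-- Lemma 1: ‖S_n(β₀) − S̄_n(β₀)‖ = O_p(p_n). -/
theorem gee_estimating_function_approximation
    (m : ℕ) (hm : 0 < m) (p : ℕ → ℕ) (hp : ∀ n, 0 < p n)
    (Ω : ℕ → Type) [∀ n, MeasurableSpace (Ω n)]
    (P : ∀ n, Measure (Ω n)) [∀ n, IsProbabilityMeasure (P n)]
    (X : ∀ n, Fin n → Matrix (Fin m) (Fin (p n)) ℝ)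
    (Y : ∀ n, Fin n → Ω n → Fin m → ℝ)
    (β0 : ∀ n, Fin (p n) → ℝ)
    (hmeas : ∀ n i, Measurable (Y n i))
    (hbin : ∀ n i ω j, Y n i ω j = 0 ∨ Y n i ω j = 1)
    (hindep : ∀ n, iIndepFun (fun i => Y n i) (P n))
    (hmean : ∀ n (i : Fin n) j, ∫ ω, Y n i ω j ∂(P n) = piv (X n i) (β0 n) j)
    (R0 : Matrix (Fin m) (Fin m) ℝ) (hR0 : R0.PosDef)
    (hcorr : ∀ n (i : Fin n) j j',
      ∫ ω, eps (X n i) (β0 n) (Y n i ω) j * eps (X n i) (β0 n) (Y n i ω) j' ∂(P n) = R0 j j')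
    (hA1 : ∃ C : ℝ, ∀ n (i : Fin n) j, vnorm (X n i j) ≤ C * Real.sqrt (p n))
    (b1 b2 : ℝ) (hb1 : 0 < b1) (hb2 : b2 < 1)
    (hA2 : ∀ n (i : Fin n) j, b1 ≤ piv (X n i) (β0 n) j ∧ piv (X n i) (β0 n) j ≤ b2)
    (hA2c : ∀ n, ∃ B : Set (Fin (p n) → ℝ), IsCompact B ∧ β0 n ∈ interior B)
    (b3 b4 : ℝ) (hb3 : 0 < b3)
    (hA3 : ∀ n, 0 < n → ∀ v : Fin (p n) → ℝ,
      b3 * (∑ k, v k ^ 2) ≤ (n : ℝ)⁻¹ * (v ⬝ᵥ (∑ i, (X n i)ᵀ * X n i).mulVec v) ∧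
      (n : ℝ)⁻¹ * (v ⬝ᵥ (∑ i, (X n i)ᵀ * X n i).mulVec v) ≤ b4 * (∑ k, v k ^ 2))
    (Rbar : Matrix (Fin m) (Fin m) ℝ) (hRbar : Rbar.PosDef)
    (Rhat : ∀ n, Ω n → Matrix (Fin m) (Fin m) ℝ)
    (hA4 : IsBigOP P (fun n ω => fnorm ((Rhat n ω)⁻¹ - Rbar⁻¹))
      (fun n => Real.sqrt (p n / n)))
    (hrate : Tendsto (fun n => (p n : ℝ) ^ 2 / n) atTop (𝓝 0)) :
    IsBigOP P (fun n ω => vnorm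
        ((∑ i, Scluster (X n i) ((Rhat n ω)⁻¹) (β0 n) (Y n i ω)) -
         (∑ i, Scluster (X n i) Rbar⁻¹ (β0 n) (Y n i ω))))
      (fun n => (p n : ℝ)) :=
  gee_estimating_function_approximation_general m p hp Ω P X Y β0 hmeas hbin hindep hmean hA1 Rbar
    Rhat hA4
end
end

section
/- Assume conditions (A1)–(A4). If p_n^2/n = o(1), then for every Δ > 0, sup over β with ||β − β_{n0}|| ≤ Δ√(p_n/n) and over unit vectors b ∈ R^{p_n} of |b^T [H̄_n(β) − H̄_n(β_{n0})] b| is O_p(√n · p_n). -/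
open MeasureTheory ProbabilityTheory Filter Matrix
open scoped BigOperators ENNReal NNReal Topology

noncomputable section

open GEE

/-! `H̄_n` is deterministic, so the claim is a uniform bound. Since
`√(π(1 - π)) = 1 / (2 cosh(t/2))` for `π = logistic t`, the diagonal entries of `A_i^{1/2}` lie in
`[0, 1/2]` and are `1/4`-Lipschitz in the linear predictor `X_ijᵀ β`, which by (A1) moves by at most
`δ = C √p_n · Δ √(p_n/n)` on the ball. Hence the `(j, k)` entry of
`A_i^{1/2}(β) R̄⁻¹ A_i^{1/2}(β) - A_i^{1/2}(β₀) R̄⁻¹ A_i^{1/2}(β₀)` is at most `|R̄⁻¹_jk| δ / 4`, so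
`|bᵀ (H̄_n(β) - H̄_n(β₀)) b| ≤ (∑ |R̄⁻¹_jk|) (δ / 4) ∑_i ‖X_i b‖²`, and (A3) bounds the last sum by
`b₄ n`; altogether `O(√n p_n)`. -/

namespace GEE

open Finset

section Linear

variable {ι κ : Type*} [Fintype ι] [Fintype κ]

lemma abs_dotProduct_le_vnorm_mul_vnorm {k : ℕ} (u v : Fin k → ℝ) :
    |u ⬝ᵥ v| ≤ vnorm u * vnorm v := by
  rw [vnorm, vnorm, ← Real.sqrt_mul (sum_nonneg fun _ _ => sq_nonneg _)]
  exact Real.abs_le_sqrt (sum_mul_sq_le_sq_mul_sq _ u v)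

lemma sum_sq_eq_one_of_vnorm_eq_one {k : ℕ} {v : Fin k → ℝ} (hv : vnorm v = 1) :
    ∑ i, v i ^ 2 = 1 :=
  Real.sqrt_eq_one.1 hv

lemma dotProduct_transpose_mul_mul_mulVec (A : Matrix ι κ ℝ) (M : Matrix ι ι ℝ) (v : κ → ℝ) :
    v ⬝ᵥ (Aᵀ * M * A) *ᵥ v = (A *ᵥ v) ⬝ᵥ M *ᵥ (A *ᵥ v) := by
  rw [← mulVec_mulVec, ← mulVec_mulVec, dotProduct_mulVec, vecMul_transpose]

lemma dotProduct_transpose_mul_mulVec (A : Matrix ι κ ℝ) (v : κ → ℝ) :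
    v ⬝ᵥ (Aᵀ * A) *ᵥ v = (A *ᵥ v) ⬝ᵥ A *ᵥ v := by
  rw [← mulVec_mulVec, dotProduct_mulVec, vecMul_transpose]

lemma abs_mul_self_le_dotProduct_self (u : ι → ℝ) (j k : ι) : |u j * u k| ≤ u ⬝ᵥ u := by
  have hsq : ∀ l, u l ^ 2 ≤ u ⬝ᵥ u := fun l => by
    simpa only [dotProduct, sq] using
      single_le_sum (f := fun l => u l * u l) (fun l _ => mul_self_nonneg _) (mem_univ l)
  rw [abs_mul]
  nlinarith [hsq j, hsq k, sq_abs (u j), sq_abs (u k), sq_nonneg (|u j| - |u k|)]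

lemma abs_dotProduct_mulVec_le (u : ι → ℝ) (M N : Matrix ι ι ℝ) (hMN : ∀ j k, |M j k| ≤ N j k) :
    |u ⬝ᵥ M *ᵥ u| ≤ (∑ j, ∑ k, N j k) * (u ⬝ᵥ u) := by
  have hexpand : u ⬝ᵥ M *ᵥ u = ∑ j, ∑ k, u j * u k * M j k := by
    simp only [dotProduct, mulVec, mul_sum]
    exact sum_congr rfl fun j _ => sum_congr rfl fun k _ => by ring
  rw [hexpand, sum_mul]
  refine (abs_sum_le_sum_abs _ _).trans (sum_le_sum fun j _ => ?_)
  rw [sum_mul]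
  refine (abs_sum_le_sum_abs _ _).trans (sum_le_sum fun k _ => ?_)
  rw [abs_mul, mul_comm (N j k)]
  exact mul_le_mul (abs_mul_self_le_dotProduct_self u j k) (hMN j k) (abs_nonneg _)
    (dotProduct_self_star_nonneg u)

lemma diagonal_mul_mul_diagonal_sub_apply [DecidableEq ι] (d e : ι → ℝ)
    (W : Matrix ι ι ℝ) (j k : ι) :
    (diagonal d * W * diagonal d - diagonal e * W * diagonal e) j k =
      W j k * (d j * d k - e j * e k) := by
  simp only [Matrix.sub_apply, mul_diagonal, diagonal_mul]
  ring

end Linear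

lemma abs_mul_sub_mul_le {a b c d r s : ℝ} (hb : |b| ≤ r) (hc : |c| ≤ r)
    (hac : |a - c| ≤ s) (hbd : |b - d| ≤ s) : |a * b - c * d| ≤ 2 * r * s := by
  calc |a * b - c * d| = |(a - c) * b + c * (b - d)| := by ring_nf
    _ ≤ |a - c| * |b| + |c| * |b - d| := by
        rw [← abs_mul, ← abs_mul]; exact abs_add_le _ _
    _ ≤ s * r + r * s :=
        add_le_add (mul_le_mul hac hb (abs_nonneg _) ((abs_nonneg _).trans hac))
          (mul_le_mul hc hbd (abs_nonneg _) ((abs_nonneg _).trans hb))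
    _ = 2 * r * s := by ring

def logisticSD (t : ℝ) : ℝ := Real.sqrt (logistic t * (1 - logistic t))

lemma logisticSD_eq_inv_two_mul_cosh (t : ℝ) : logisticSD t = (2 * Real.cosh (t / 2))⁻¹ := by
  have hexp : Real.exp t = Real.exp (t / 2) ^ 2 := by
    rw [← Real.exp_nat_mul]; norm_num; ring
  have hvar : logistic t * (1 - logistic t) = (Real.exp (t / 2) / (1 + Real.exp t)) ^ 2 := by
    unfold logistic; field_simp; rw [hexp]; ring
  rw [logisticSD, hvar, Real.sqrt_sq (by positivity), Real.cosh_eq, hexp]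
  have hprod : Real.exp (t / 2) * Real.exp (-(t / 2)) = 1 := by rw [← Real.exp_add]; simp
  field_simp
  nlinarith [hprod]

lemma logisticSD_le_half (t : ℝ) : logisticSD t ≤ 1 / 2 := by
  rw [logisticSD_eq_inv_two_mul_cosh, one_div]
  exact inv_anti₀ two_pos (by linarith [Real.one_le_cosh (t / 2)])

lemma logisticSD_nonneg (t : ℝ) : 0 ≤ logisticSD t := Real.sqrt_nonneg _

-- The derivative `-sinh u / (2 cosh² u)` has absolute value at most `1/2`, as `|sinh| ≤ cosh`
-- and `1 ≤ cosh`.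
lemma lipschitzWith_inv_two_mul_cosh : LipschitzWith (1 / 2) fun u : ℝ => (2 * Real.cosh u)⁻¹ := by
  have hderiv : ∀ x : ℝ, HasDerivAt (fun u : ℝ => (2 * Real.cosh u)⁻¹)
      (-(2 * Real.sinh x) / (2 * Real.cosh x) ^ 2) x := fun x =>
    ((Real.hasDerivAt_cosh x).const_mul 2).inv (by positivity)
  refine lipschitzWith_of_nnnorm_deriv_le (fun x => (hderiv x).differentiableAt) fun x => ?_
  have hsinh : |Real.sinh x| ≤ Real.cosh x := by
    nlinarith [Real.cosh_sq_sub_sinh_sq x, sq_abs (Real.sinh x), Real.cosh_pos x]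
  rw [← NNReal.coe_le_coe, coe_nnnorm, (hderiv x).deriv, Real.norm_eq_abs, abs_div, abs_neg,
    abs_mul, abs_two, abs_of_pos (by positivity : (0 : ℝ) < (2 * Real.cosh x) ^ 2),
    div_le_iff₀ (by positivity)]
  push_cast
  nlinarith [Real.one_le_cosh x]

lemma abs_logisticSD_sub_le (s t : ℝ) : |logisticSD s - logisticSD t| ≤ |s - t| / 4 := by
  have h := lipschitzWith_inv_two_mul_cosh.dist_le_mul (s / 2) (t / 2)
  rw [Real.dist_eq, Real.dist_eq, ← sub_div, abs_div, abs_two] at h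
  rw [logisticSD_eq_inv_two_mul_cosh, logisticSD_eq_inv_two_mul_cosh]
  push_cast at h
  linarith


lemma Hcluster_sub_Hcluster {a b : ℕ} (Xi : Matrix (Fin a) (Fin b) ℝ) (W : Matrix (Fin a) (Fin a) ℝ)
    (β β' : Fin b → ℝ) :
    Hcluster Xi W β - Hcluster Xi W β' =
      Xiᵀ * (Ahalf Xi β * W * Ahalf Xi β - Ahalf Xi β' * W * Ahalf Xi β') * Xi := by
  simp only [Hcluster, Matrix.mul_sub, Matrix.sub_mul, Matrix.mul_assoc]

lemma abs_quadForm_Hcluster_sub_le {a b : ℕ} (Xi : Matrix (Fin a) (Fin b) ℝ)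
    (W : Matrix (Fin a) (Fin a) ℝ) (β β' v : Fin b → ℝ) {δ : ℝ}
    (hδ : ∀ j, |(Xi *ᵥ β) j - (Xi *ᵥ β') j| ≤ δ) :
    |v ⬝ᵥ (Hcluster Xi W β - Hcluster Xi W β') *ᵥ v| ≤
      (∑ j, ∑ k, |W j k|) * (δ / 4) * (v ⬝ᵥ (Xiᵀ * Xi) *ᵥ v) := by
  have hsd : ∀ j, |logisticSD ((Xi *ᵥ β) j) - logisticSD ((Xi *ᵥ β') j)| ≤ δ / 4 := fun j =>
    (abs_logisticSD_sub_le _ _).trans (by linarith [hδ j])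
  have hbound : ∀ t, |logisticSD t| ≤ 1 / 2 := fun t => by
    rw [abs_of_nonneg (logisticSD_nonneg t)]; exact logisticSD_le_half t
  rw [Hcluster_sub_Hcluster, dotProduct_transpose_mul_mul_mulVec, dotProduct_transpose_mul_mulVec]
  calc _ ≤ (∑ j, ∑ k, |W j k| * (δ / 4)) * ((Xi *ᵥ v) ⬝ᵥ Xi *ᵥ v) := by
        refine abs_dotProduct_mulVec_le _ _ _ fun j k => ?_
        rw [Ahalf, Ahalf, diagonal_mul_mul_diagonal_sub_apply, abs_mul]
        refine mul_le_mul_of_nonneg_left ?_ (abs_nonneg _)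
        exact (abs_mul_sub_mul_le (hbound _) (hbound _) (hsd j) (hsd k)).trans_eq (by ring)
    _ = _ := by simp only [sum_mul]

lemma abs_quadForm_sum_Hcluster_sub_le {ι : Type*} [Fintype ι] {a b : ℕ}
    (X : ι → Matrix (Fin a) (Fin b) ℝ) (W : Matrix (Fin a) (Fin a) ℝ) (β β' v : Fin b → ℝ)
    {δ : ℝ} (hδ : ∀ i j, |(X i *ᵥ β) j - (X i *ᵥ β') j| ≤ δ) :
    |v ⬝ᵥ ((∑ i, Hcluster (X i) W β) - ∑ i, Hcluster (X i) W β') *ᵥ v| ≤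
      (∑ j, ∑ k, |W j k|) * (δ / 4) * (v ⬝ᵥ (∑ i, (X i)ᵀ * X i) *ᵥ v) := by
  rw [← sum_sub_distrib, sum_mulVec, dotProduct_sum, sum_mulVec, dotProduct_sum, mul_sum]
  exact (abs_sum_le_sum_abs _ _).trans
    (sum_le_sum fun i _ => abs_quadForm_Hcluster_sub_le _ _ _ _ _ (hδ i))

lemma abs_mulVec_sub_mulVec_le {a b : ℕ} (A : Matrix (Fin a) (Fin b) ℝ) (β β' : Fin b → ℝ)
    (j : Fin a) : |(A *ᵥ β) j - (A *ᵥ β') j| ≤ vnorm (A j) * vnorm (β - β') := by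
  rw [← Pi.sub_apply, ← mulVec_sub]
  exact abs_dotProduct_le_vnorm_mul_vnorm _ _

lemma isBigOP_of_eventually_abs_le {Ω : ℕ → Type} [∀ n, MeasurableSpace (Ω n)]
    (P : ∀ n, Measure (Ω n)) (Z : ∀ n, Ω n → ℝ) (a : ℕ → ℝ) {C : ℝ} (hC : 0 < C)
    (h : ∀ᶠ n in atTop, ∀ ω, |Z n ω| ≤ C * a n) : IsBigOP P Z a := by
  refine fun _ _ => ⟨C, hC, h.mono fun n hn => ?_⟩
  have hempty : {ω | C * a n < |Z n ω|} = ∅ :=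
    Set.eq_empty_of_forall_notMem fun ω hω => (hn ω).not_gt hω
  simp [hempty]

lemma sqrt_mul_sqrt_div_mul_self {x y : ℝ} (hx : 0 ≤ x) (hy : 0 < y) :
    Real.sqrt x * Real.sqrt (x / y) * y = Real.sqrt y * x := by
  rw [Real.sqrt_div hx, ← mul_div_assoc, Real.mul_self_sqrt hx]
  field_simp
  rw [Real.sq_sqrt hy.le]

lemma abs_quadForm_sum_Hcluster_sub_le_of_vnorm_le {n a b : ℕ} (hn : 0 < n)
    (X : Fin n → Matrix (Fin a) (Fin b) ℝ) (W : Matrix (Fin a) (Fin a) ℝ) {β β' v : Fin b → ℝ}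
    {C Δ B : ℝ} (hC : 0 ≤ C) (hΔ : 0 ≤ Δ) (hX : ∀ i j, vnorm (X i j) ≤ C * Real.sqrt b)
    (hβ : vnorm (β - β') ≤ Δ * Real.sqrt (b / n))
    (hv : v ⬝ᵥ (∑ i, (X i)ᵀ * X i) *ᵥ v ≤ B * n) :
    |v ⬝ᵥ ((∑ i, Hcluster (X i) W β) - ∑ i, Hcluster (X i) W β') *ᵥ v| ≤
      (∑ j, ∑ k, |W j k|) * (C * Δ / 4) * B * (Real.sqrt n * b) := by
  set δ := C * Real.sqrt b * (Δ * Real.sqrt (b / n))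
  have hδ : ∀ i j, |(X i *ᵥ β) j - (X i *ᵥ β') j| ≤ δ := fun i j =>
    (abs_mulVec_sub_mulVec_le _ _ _ j).trans
      (mul_le_mul (hX i j) hβ (Real.sqrt_nonneg _) (by positivity))
  have hW : 0 ≤ ∑ j, ∑ k, |W j k| := sum_nonneg fun _ _ => sum_nonneg fun _ _ => abs_nonneg _
  calc _ ≤ (∑ j, ∑ k, |W j k|) * (δ / 4) * (v ⬝ᵥ (∑ i, (X i)ᵀ * X i) *ᵥ v) :=
        abs_quadForm_sum_Hcluster_sub_le _ _ _ _ _ hδ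
    _ ≤ (∑ j, ∑ k, |W j k|) * (δ / 4) * (B * n) := by gcongr
    _ = (∑ j, ∑ k, |W j k|) * (C * Δ / 4) * B * (Real.sqrt b * Real.sqrt (b / n) * n) := by ring
    _ = _ := by rw [sqrt_mul_sqrt_div_mul_self (Nat.cast_nonneg _) (Nat.cast_pos.2 hn)]

end GEE

theorem gee_Hbar_equicontinuity_general
    (m : ℕ) (p : ℕ → ℕ)
    (Ω : ℕ → Type) [∀ n, MeasurableSpace (Ω n)]
    (P : ∀ n, Measure (Ω n))
    (X : ∀ n, Fin n → Matrix (Fin m) (Fin (p n)) ℝ)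
    (β0 : ∀ n, Fin (p n) → ℝ)
    (hA1 : ∃ C : ℝ, ∀ n (i : Fin n) j, vnorm (X n i j) ≤ C * Real.sqrt (p n))
    (b3 b4 : ℝ)
    (hA3 : ∀ n, 0 < n → ∀ v : Fin (p n) → ℝ,
      b3 * (∑ k, v k ^ 2) ≤ (n : ℝ)⁻¹ * (v ⬝ᵥ (∑ i, (X n i)ᵀ * X n i).mulVec v) ∧
      (n : ℝ)⁻¹ * (v ⬝ᵥ (∑ i, (X n i)ᵀ * X n i).mulVec v) ≤ b4 * (∑ k, v k ^ 2))
    (Rbar : Matrix (Fin m) (Fin m) ℝ) :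
    ∀ Δ : ℝ, 0 < Δ →
      IsBigOP P (fun n _ω => sSup {r : ℝ | ∃ β b : Fin (p n) → ℝ,
          vnorm (β - β0 n) ≤ Δ * Real.sqrt (p n / n) ∧ vnorm b = 1 ∧
          r = |b ⬝ᵥ
            ((∑ i, Hcluster (X n i) Rbar⁻¹ β) -
             (∑ i, Hcluster (X n i) Rbar⁻¹ (β0 n))).mulVec b|})
        (fun n => Real.sqrt n * p n) := by
  intro Δ hΔ
  obtain ⟨C, hX⟩ := hA1
  set K := (∑ j, ∑ k, |Rbar⁻¹ j k|) * (max C 0 * Δ / 4) * max b4 0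
  refine isBigOP_of_eventually_abs_le P _ _ (C := K + 1) (by positivity) ?_
  filter_upwards [eventually_gt_atTop 0] with n hn _
  rw [abs_of_nonneg (Real.sSup_nonneg (by rintro _ ⟨_, _, _, _, rfl⟩; exact abs_nonneg _))]
  refine Real.sSup_le ?_ (by positivity)
  rintro _ ⟨β, b, hβ, hb, rfl⟩
  have hXX : b ⬝ᵥ (∑ i, (X n i)ᵀ * X n i) *ᵥ b ≤ max b4 0 * n := by
    have h := (hA3 n hn b).2
    rw [sum_sq_eq_one_of_vnorm_eq_one hb, mul_one, inv_mul_le_iff₀ (Nat.cast_pos.2 hn),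
      mul_comm] at h
    exact h.trans (by gcongr; exact le_max_left _ _)
  refine (abs_quadForm_sum_Hcluster_sub_le_of_vnorm_le hn _ _ (le_max_right C 0) hΔ.le
    (fun i j => (hX n i j).trans (by gcongr; exact le_max_left _ _)) hβ hXX).trans ?_
  gcongr
  exact le_add_of_nonneg_right zero_le_one

/-- Lemma 5: equicontinuity of H̄_n near β₀. -/
theorem gee_Hbar_equicontinuity
    (m : ℕ) (hm : 0 < m) (p : ℕ → ℕ) (hp : ∀ n, 0 < p n)
    (Ω : ℕ → Type) [∀ n, MeasurableSpace (Ω n)]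
    (P : ∀ n, Measure (Ω n)) [∀ n, IsProbabilityMeasure (P n)]
    (X : ∀ n, Fin n → Matrix (Fin m) (Fin (p n)) ℝ)
    (Y : ∀ n, Fin n → Ω n → Fin m → ℝ)
    (β0 : ∀ n, Fin (p n) → ℝ)
    (hmeas : ∀ n i, Measurable (Y n i))
    (hbin : ∀ n i ω j, Y n i ω j = 0 ∨ Y n i ω j = 1)
    (hindep : ∀ n, iIndepFun (fun i => Y n i) (P n))
    (hmean : ∀ n (i : Fin n) j, ∫ ω, Y n i ω j ∂(P n) = piv (X n i) (β0 n) j)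
    (R0 : Matrix (Fin m) (Fin m) ℝ) (hR0 : R0.PosDef)
    (hcorr : ∀ n (i : Fin n) j j',
      ∫ ω, eps (X n i) (β0 n) (Y n i ω) j * eps (X n i) (β0 n) (Y n i ω) j' ∂(P n) = R0 j j')
    (hA1 : ∃ C : ℝ, ∀ n (i : Fin n) j, vnorm (X n i j) ≤ C * Real.sqrt (p n))
    (b1 b2 : ℝ) (hb1 : 0 < b1) (hb2 : b2 < 1)
    (hA2 : ∀ n (i : Fin n) j, b1 ≤ piv (X n i) (β0 n) j ∧ piv (X n i) (β0 n) j ≤ b2)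
    (hA2c : ∀ n, ∃ B : Set (Fin (p n) → ℝ), IsCompact B ∧ β0 n ∈ interior B)
    (b3 b4 : ℝ) (hb3 : 0 < b3)
    (hA3 : ∀ n, 0 < n → ∀ v : Fin (p n) → ℝ,
      b3 * (∑ k, v k ^ 2) ≤ (n : ℝ)⁻¹ * (v ⬝ᵥ (∑ i, (X n i)ᵀ * X n i).mulVec v) ∧
      (n : ℝ)⁻¹ * (v ⬝ᵥ (∑ i, (X n i)ᵀ * X n i).mulVec v) ≤ b4 * (∑ k, v k ^ 2))
    (Rbar : Matrix (Fin m) (Fin m) ℝ) (hRbar : Rbar.PosDef)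
    (Rhat : ∀ n, Ω n → Matrix (Fin m) (Fin m) ℝ)
    (hA4 : IsBigOP P (fun n ω => fnorm ((Rhat n ω)⁻¹ - Rbar⁻¹))
      (fun n => Real.sqrt (p n / n)))
    (hrate : Tendsto (fun n => (p n : ℝ) ^ 2 / n) atTop (𝓝 0)) :
    ∀ Δ : ℝ, 0 < Δ →
      IsBigOP P (fun n _ω => sSup {r : ℝ | ∃ β b : Fin (p n) → ℝ,
          vnorm (β - β0 n) ≤ Δ * Real.sqrt (p n / n) ∧ vnorm b = 1 ∧
          r = |b ⬝ᵥ
            ((∑ i, Hcluster (X n i) Rbar⁻¹ β) -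
             (∑ i, Hcluster (X n i) Rbar⁻¹ (β0 n))).mulVec b|})
        (fun n => Real.sqrt n * p n) :=
  gee_Hbar_equicontinuity_general m p Ω P X β0 hA1 b3 b4 hA3 Rbar
end
end
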